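/- arXiv:2403.13848 — 2 statements merged into one kernel-verified Lean document; each statement's English description precedes it below -/
import Mathlib

section
/- Let β > 0, let Λ and n be integers with n ≥ Λ ≥ 1 and n ≥ 3, and define ξ(t) = e^{−βt}·g(max(Λ, n − t)). Set t* = n − (1 − β − √((1−β)² − 4β))/(2β) if (1−β)² − 4β ≥ 0, and t* = 0 otherwise (so t* ≥ 0 under the stated hypotheses). Then the smooth sensitivity of the Gini impurity at support size n with minimum support Λ, namely sup_{k ∈ ℕ} e^{−βk}·g(max(Λ, n − k)), equals max{ ξ(0), ξ(⌊t*⌋), ξ(⌈t*⌉), ξ(n − Λ) }. -/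
/-- Local sensitivity of the Gini impurity as a function of the support size. -/
noncomputable def g (x : ℝ) : ℝ := 1 - (x / (x + 1))^2 - (1 / (x + 1))^2

/-- `ξ(t) = e^{−βt}·g(max(Λ, n − t))`. -/
noncomputable def xi (β : ℝ) (Λ n : ℤ) (t : ℝ) : ℝ :=
  Real.exp (-β * t) * g (max (Λ : ℝ) ((n : ℝ) - t))

/-!
Write `u = n - t`. For `t ≤ n - Λ` we have `ξ(t) = e^{-βt} g(u)` with `g(u) = 2u/(u+1)²`, and
the `t`-derivative of this has the sign of `-(βu² + (β-1)u + 1)`. Hence, while the clamp is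
inactive, `ξ` decreases as long as `u` lies above the larger root of this quadratic, increases
between the roots, and decreases again once `u` is below the smaller root, i.e. once `t ≥ t*`;
past `t = n - Λ` it is `e^{-βt} g(Λ)`, which decreases too. A function that decreases, increases,
then decreases from `c` on attains its maximum over `ℕ` at `0`, `⌊c⌋` or `⌈c⌉`; here
`c = min t* (n - Λ)`. If the quadratic has no real root, or its larger root lies below `Λ`, `ξ`
just decreases and the maximum is `ξ 0`. Finally `t* ≥ 0` because the smaller root is at most
`3`.
-/

open Set Real

lemma g_eq_div {x : ℝ} (hx : x + 1 ≠ 0) : g x = 2 * x / (x + 1) ^ 2 := by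
  unfold g; field_simp; ring

lemma g_nonneg {x : ℝ} (hx : 0 ≤ x) : 0 ≤ g x := by
  rw [g_eq_div (by positivity)]; positivity

lemma hasDerivAt_g {x : ℝ} (hx : x + 1 ≠ 0) : HasDerivAt g (2 * (1 - x) / (x + 1) ^ 3) x := by
  have hdiv := ((hasDerivAt_id' x).const_mul 2).div (((hasDerivAt_id' x).add_const 1).pow 2)
    (pow_ne_zero 2 hx)
  refine (hdiv.congr_of_eventuallyEq ?_).congr_deriv ?_
  · filter_upwards [(continuous_add_const (1 : ℝ)).continuousAt.eventually_ne hx] with y hy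
    exact g_eq_div hy
  · simp only [Pi.pow_apply]; field_simp; ring

noncomputable def decayedGini (β N t : ℝ) : ℝ := exp (-β * t) * g (N - t)

def criticalQuadratic (β u : ℝ) : ℝ := β * u ^ 2 + (β - 1) * u + 1

lemma hasDerivAt_decayedGini (β N : ℝ) {t : ℝ} (ht : N - t + 1 ≠ 0) :
    HasDerivAt (decayedGini β N)
      (-2 * exp (-β * t) * criticalQuadratic β (N - t) / (N - t + 1) ^ 3) t := by
  have he : HasDerivAt (fun t => exp (-β * t)) (exp (-β * t) * (-β * 1)) t :=
    ((hasDerivAt_id t).const_mul (-β)).exp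
  have hg : HasDerivAt (fun t => g (N - t)) (2 * (1 - (N - t)) / (N - t + 1) ^ 3 * (-1)) t :=
    (hasDerivAt_g ht).comp t ((hasDerivAt_id t).const_sub N)
  refine (he.mul hg).congr_deriv ?_
  rw [g_eq_div ht, criticalQuadratic]
  field_simp
  ring

lemma antitoneOn_decayedGini {β N : ℝ} {D : Set ℝ} (hD : Convex ℝ D)
    (hN : ∀ t ∈ D, t < N + 1)
    (hq : ∀ t ∈ interior D, 0 ≤ criticalQuadratic β (N - t)) :
    AntitoneOn (decayedGini β N) D := by
  have hderiv : ∀ t ∈ D, HasDerivAt (decayedGini β N) _ t := fun t ht =>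
    hasDerivAt_decayedGini β N (by linarith [hN t ht])
  refine antitoneOn_of_hasDerivWithinAt_nonpos hD
    (fun t ht => (hderiv t ht).continuousAt.continuousWithinAt)
    (fun t ht => (hderiv t (interior_subset ht)).hasDerivWithinAt) fun t ht => ?_
  have hpos : 0 < N - t + 1 := by linarith [hN t (interior_subset ht)]
  have hqt := hq t ht
  apply div_nonpos_of_nonpos_of_nonneg _ (by positivity)
  nlinarith [exp_pos (-β * t)]

lemma monotoneOn_decayedGini {β N : ℝ} {D : Set ℝ} (hD : Convex ℝ D)
    (hN : ∀ t ∈ D, t < N + 1)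
    (hq : ∀ t ∈ interior D, criticalQuadratic β (N - t) ≤ 0) :
    MonotoneOn (decayedGini β N) D := by
  have hderiv : ∀ t ∈ D, HasDerivAt (decayedGini β N) _ t := fun t ht =>
    hasDerivAt_decayedGini β N (by linarith [hN t ht])
  refine monotoneOn_of_hasDerivWithinAt_nonneg hD
    (fun t ht => (hderiv t ht).continuousAt.continuousWithinAt)
    (fun t ht => (hderiv t (interior_subset ht)).hasDerivWithinAt) fun t ht => ?_
  have hpos : 0 < N - t + 1 := by linarith [hN t (interior_subset ht)]
  have hqt := hq t ht
  apply div_nonneg _ (by positivity)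
  nlinarith [exp_pos (-β * t)]

section roots

variable {β : ℝ}

noncomputable def lowerRoot (β : ℝ) : ℝ := (1 - β - √((1 - β) ^ 2 - 4 * β)) / (2 * β)

noncomputable def upperRoot (β : ℝ) : ℝ := (1 - β + √((1 - β) ^ 2 - 4 * β)) / (2 * β)

lemma criticalQuadratic_pos (hβ : 0 < β) (hdisc : (1 - β) ^ 2 - 4 * β < 0) (u : ℝ) :
    0 < criticalQuadratic β u := by
  unfold criticalQuadratic
  nlinarith [sq_nonneg (2 * β * u + β - 1)]

lemma criticalQuadratic_eq_mul (hβ : β ≠ 0) (hdisc : 0 ≤ (1 - β) ^ 2 - 4 * β) (u : ℝ) :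
    criticalQuadratic β u = β * (u - lowerRoot β) * (u - upperRoot β) := by
  have hs := sq_sqrt hdisc
  unfold criticalQuadratic lowerRoot upperRoot
  set s := √((1 - β) ^ 2 - 4 * β)
  field_simp
  linear_combination hs

lemma lowerRoot_le_upperRoot (hβ : 0 < β) : lowerRoot β ≤ upperRoot β := by
  unfold lowerRoot upperRoot
  gcongr
  linarith [sqrt_nonneg ((1 - β) ^ 2 - 4 * β)]

lemma lowerRoot_le_three (hβ : 0 < β) : lowerRoot β ≤ 3 := by
  rw [lowerRoot, div_le_iff₀ (by positivity)]
  rcases le_total (1 - 7 * β) 0 with h | h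
  · linarith [sqrt_nonneg ((1 - β) ^ 2 - 4 * β)]
  · have : 1 - 7 * β ≤ √((1 - β) ^ 2 - 4 * β) := Real.le_sqrt_of_sq_le (by nlinarith)
    linarith

lemma criticalQuadratic_nonneg_of_le_lowerRoot (hβ : 0 < β) (hdisc : 0 ≤ (1 - β) ^ 2 - 4 * β)
    {u : ℝ} (hu : u ≤ lowerRoot β) : 0 ≤ criticalQuadratic β u := by
  rw [criticalQuadratic_eq_mul hβ.ne' hdisc]
  have := lowerRoot_le_upperRoot hβ
  exact mul_nonneg_of_nonpos_of_nonpos (mul_nonpos_of_nonneg_of_nonpos hβ.le (by linarith))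
    (by linarith)

lemma criticalQuadratic_nonneg_of_upperRoot_le (hβ : 0 < β) (hdisc : 0 ≤ (1 - β) ^ 2 - 4 * β)
    {u : ℝ} (hu : upperRoot β ≤ u) : 0 ≤ criticalQuadratic β u := by
  rw [criticalQuadratic_eq_mul hβ.ne' hdisc]
  have := lowerRoot_le_upperRoot hβ
  exact mul_nonneg (mul_nonneg hβ.le (by linarith)) (by linarith)

lemma criticalQuadratic_nonpos (hβ : 0 < β) (hdisc : 0 ≤ (1 - β) ^ 2 - 4 * β)
    {u : ℝ} (hl : lowerRoot β ≤ u) (hu : u ≤ upperRoot β) :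
    criticalQuadratic β u ≤ 0 := by
  rw [criticalQuadratic_eq_mul hβ.ne' hdisc]
  exact mul_nonpos_of_nonneg_of_nonpos (mul_nonneg hβ.le (by linarith)) (by linarith)

end roots

lemma apply_natCast_le_max_of_antitone_monotone_antitone {f : ℝ → ℝ} {a c : ℝ}
    (h₁ : AntitoneOn f (Icc 0 a)) (h₂ : MonotoneOn f (Icc a c)) (h₃ : AntitoneOn f (Ici c))
    (k : ℕ) : f k ≤ max (f 0) (max (f ⌊c⌋) (f ⌈c⌉)) := by
  have hk : (0 : ℝ) ≤ k := k.cast_nonneg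
  rcases le_or_gt (k : ℝ) a with hka | hak
  · exact le_max_of_le_left (h₁ ⟨le_rfl, hk.trans hka⟩ ⟨hk, hka⟩ hk)
  rcases le_or_gt (k : ℝ) c with hkc | hck
  · have hfl : (k : ℝ) ≤ ⌊c⌋ := by exact_mod_cast Int.le_floor.2 (by exact_mod_cast hkc)
    exact le_max_of_le_right <| le_max_of_le_left <|
      h₂ ⟨hak.le, hkc⟩ ⟨hak.le.trans hfl, Int.floor_le c⟩ hfl
  · have hcl : (⌈c⌉ : ℝ) ≤ k := by exact_mod_cast Int.ceil_le.2 (by exact_mod_cast hck.le)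
    exact le_max_of_le_right <| le_max_of_le_right <| h₃ (Int.le_ceil c) hck.le hcl

section xi

variable {β : ℝ} {Λ n : ℤ}

lemma xi_eqOn_decayedGini : EqOn (xi β Λ n) (decayedGini β n) (Iic (n - Λ)) := fun t ht => by
  rw [xi, decayedGini, max_eq_right (by linarith [mem_Iic.1 ht])]

lemma antitoneOn_xi_of_subset {D : Set ℝ} (hΛ : 0 ≤ Λ) (hD : Convex ℝ D)
    (hDΛ : D ⊆ Iic (n - Λ)) (hq : ∀ t ∈ interior D, 0 ≤ criticalQuadratic β (n - t)) :
    AntitoneOn (xi β Λ n) D := by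
  have hΛ' : (0 : ℝ) ≤ Λ := by exact_mod_cast hΛ
  refine (antitoneOn_decayedGini hD (fun t ht => ?_) hq).congr (xi_eqOn_decayedGini.mono hDΛ).symm
  linarith [mem_Iic.1 (hDΛ ht)]

lemma monotoneOn_xi_of_subset {D : Set ℝ} (hΛ : 0 ≤ Λ) (hD : Convex ℝ D)
    (hDΛ : D ⊆ Iic (n - Λ)) (hq : ∀ t ∈ interior D, criticalQuadratic β (n - t) ≤ 0) :
    MonotoneOn (xi β Λ n) D := by
  have hΛ' : (0 : ℝ) ≤ Λ := by exact_mod_cast hΛ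
  refine (monotoneOn_decayedGini hD (fun t ht => ?_) hq).congr (xi_eqOn_decayedGini.mono hDΛ).symm
  linarith [mem_Iic.1 (hDΛ ht)]

lemma antitoneOn_xi_Ici_sub (hβ : 0 ≤ β) (hΛ : 0 ≤ Λ) :
    AntitoneOn (xi β Λ n) (Ici (n - Λ)) := by
  intro s hs t ht hst
  rw [xi, xi, max_eq_left (show (n : ℝ) - s ≤ Λ by linarith [mem_Ici.1 hs]),
    max_eq_left (show (n : ℝ) - t ≤ Λ by linarith [mem_Ici.1 ht])]
  exact mul_le_mul_of_nonneg_right (exp_le_exp.2 (by nlinarith)) (g_nonneg (by exact_mod_cast hΛ))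

lemma antitoneOn_xi_Ici {c : ℝ} (hβ : 0 ≤ β) (hΛ : 0 ≤ Λ) (hc : c ≤ n - Λ)
    (hq : ∀ t ∈ Ioo c (n - Λ : ℝ), 0 ≤ criticalQuadratic β (n - t)) :
    AntitoneOn (xi β Λ n) (Ici c) := by
  rw [← Icc_union_Ici_eq_Ici hc]
  refine AntitoneOn.union_right ?_ (antitoneOn_xi_Ici_sub hβ hΛ) (isGreatest_Icc hc) isLeast_Ici
  exact antitoneOn_xi_of_subset hΛ (convex_Icc _ _) Icc_subset_Iic_self (by rwa [interior_Icc])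

lemma xi_natCast_le_xi_zero (hβ : 0 ≤ β) (hΛ : 0 ≤ Λ) (hΛn : Λ ≤ n)
    (hq : ∀ u : ℝ, Λ ≤ u → 0 ≤ criticalQuadratic β u) (k : ℕ) :
    xi β Λ n k ≤ xi β Λ n 0 := by
  have hΛn' : (0 : ℝ) ≤ n - Λ := by rw [sub_nonneg]; exact_mod_cast hΛn
  exact antitoneOn_xi_Ici hβ hΛ hΛn' (fun t ht => hq _ (by linarith [ht.2])) self_mem_Ici
    (mem_Ici.2 k.cast_nonneg) k.cast_nonneg

lemma xi_natCast_le_of_le_upperRoot (hβ : 0 < β) (hdisc : 0 ≤ (1 - β) ^ 2 - 4 * β)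
    (hΛ : 0 ≤ Λ) (hup : Λ ≤ upperRoot β) (k : ℕ) :
    xi β Λ n k ≤ max (xi β Λ n 0) (max (xi β Λ n ⌊min (n - lowerRoot β) (n - Λ)⌋)
      (xi β Λ n ⌈min (n - lowerRoot β) (n - Λ)⌉)) := by
  have hroots := lowerRoot_le_upperRoot hβ
  refine apply_natCast_le_max_of_antitone_monotone_antitone (a := n - upperRoot β) ?_ ?_ ?_ k
  · refine antitoneOn_xi_of_subset hΛ (convex_Icc _ _)
      (fun t ht => mem_Iic.2 (by linarith [ht.2])) fun t ht => ?_
    rw [interior_Icc] at ht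
    exact criticalQuadratic_nonneg_of_upperRoot_le hβ hdisc (by linarith [ht.2])
  · refine monotoneOn_xi_of_subset hΛ (convex_Icc _ _)
      (fun t ht => le_trans ht.2 (min_le_right _ _)) fun t ht => ?_
    rw [interior_Icc] at ht
    exact criticalQuadratic_nonpos hβ hdisc (by linarith [ht.2.trans_le (min_le_left _ _)])
      (by linarith [ht.1])
  · refine antitoneOn_xi_Ici hβ.le hΛ (min_le_right _ _) fun t ht => ?_
    have : n - lowerRoot β < t := by
      rcases min_lt_iff.1 ht.1 with h | h
      · exact h
      · exact absurd ht.2 h.not_gt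
    exact criticalQuadratic_nonneg_of_le_lowerRoot hβ hdisc (by linarith)

lemma xi_natCast_le_max (hβ : 0 < β) (hΛ : 0 ≤ Λ) (hΛn : Λ ≤ n) {tstar : ℝ}
    (htstar : tstar = if (1 - β) ^ 2 - 4 * β ≥ 0 then (n : ℝ) - lowerRoot β else 0)
    (k : ℕ) :
    xi β Λ n k ≤ max (max (xi β Λ n 0) (xi β Λ n ⌊tstar⌋))
      (max (xi β Λ n ⌈tstar⌉) (xi β Λ n (n - Λ))) := by
  by_cases hdisc : 0 ≤ (1 - β) ^ 2 - 4 * β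
  swap
  · refine (xi_natCast_le_xi_zero hβ.le hΛ hΛn (fun u _ => ?_) k).trans
      (le_max_of_le_left (le_max_left _ _))
    exact (criticalQuadratic_pos hβ (not_le.1 hdisc) u).le
  by_cases hup : (Λ : ℝ) ≤ upperRoot β
  swap
  · refine (xi_natCast_le_xi_zero hβ.le hΛ hΛn (fun u hu => ?_) k).trans
      (le_max_of_le_left (le_max_left _ _))
    exact criticalQuadratic_nonneg_of_upperRoot_le hβ hdisc (by linarith [not_le.1 hup])
  refine (xi_natCast_le_of_le_upperRoot hβ hdisc hΛ hup k).trans ?_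
  rw [htstar, if_pos hdisc]
  rcases le_total ((n : ℝ) - lowerRoot β) (n - Λ) with hc | hc
  · rw [min_eq_left hc]
    exact max_le (le_max_of_le_left (le_max_left _ _))
      (max_le (le_max_of_le_left (le_max_right _ _)) (le_max_of_le_right (le_max_left _ _)))
  · rw [min_eq_right hc, ← Int.cast_sub, Int.floor_intCast, Int.ceil_intCast, Int.cast_sub,
      max_self]
    exact max_le (le_max_of_le_left (le_max_left _ _)) (le_max_of_le_right (le_max_right _ _))

end xi

theorem smooth_sensitivity_gini (β : ℝ) (hβ : 0 < β) (Λ n : ℤ)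
    (hΛ : 1 ≤ Λ) (hΛn : Λ ≤ n) (hn3 : 3 ≤ n)
    (tstar : ℝ)
    (htstar : tstar = if (1 - β)^2 - 4*β ≥ 0
      then (n : ℝ) - (1 - β - Real.sqrt ((1 - β)^2 - 4*β)) / (2*β) else 0) :
    (⨆ k : ℕ, Real.exp (-β * (k : ℝ)) * g (max (Λ : ℝ) ((n : ℝ) - (k : ℝ)))) =
      max (max (xi β Λ n 0) (xi β Λ n (⌊tstar⌋ : ℝ)))
          (max (xi β Λ n (⌈tstar⌉ : ℝ)) (xi β Λ n ((n : ℝ) - (Λ : ℝ)))) := by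
  have hbound := xi_natCast_le_max hβ (by omega) hΛn htstar
  have htstar_nonneg : 0 ≤ tstar := by
    have hn : (3 : ℝ) ≤ n := by exact_mod_cast hn3
    have h3 := lowerRoot_le_three hβ
    unfold lowerRoot at h3
    rw [htstar]
    split_ifs
    exacts [by linarith, le_rfl]
  change (⨆ k : ℕ, xi β Λ n k) = _
  have hle_iSup (j : ℤ) (hj : 0 ≤ j) : xi β Λ n j ≤ ⨆ k : ℕ, xi β Λ n k := by
    lift j to ℕ using hj
    exact_mod_cast le_ciSup ⟨_, forall_mem_range.2 hbound⟩ j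
  refine le_antisymm (ciSup_le hbound) (max_le (max_le ?_ ?_) (max_le ?_ ?_))
  · exact_mod_cast hle_iSup 0 le_rfl
  · exact hle_iSup _ (Int.floor_nonneg.2 htstar_nonneg)
  · exact hle_iSup _ (Int.ceil_nonneg htstar_nonneg)
  · exact_mod_cast hle_iSup (n - Λ) (by omega)
end

section
/- For every dataset D and every β > 0, the smooth sensitivity satisfies S*_{f,β}(D) = sup_{k ∈ ℕ} e^{−βk} · T_k(D), where T_k(D) is the local sensitivity of f at distance k from D. -/
/-- Distance between datasets: `d(D,D') = ∑_a |D(a) − D'(a)|`. -/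
noncomputable def ddist {X : Type*} [DecidableEq X] (D D' : X →₀ ℕ) : ℕ :=
  (D.support ∪ D'.support).sum fun a => ((D a : ℤ) - (D' a : ℤ)).natAbs

/-- Local sensitivity of `f` at `D`. -/
noncomputable def LS {X : Type*} [DecidableEq X] (f : (X →₀ ℕ) → ℝ) (D : X →₀ ℕ) : ℝ :=
  sSup {v | ∃ D', ddist D D' = 1 ∧ v = |f D - f D'|}

/-- Local sensitivity of `f` at distance `k` from `D`. -/
noncomputable def Tk {X : Type*} [DecidableEq X] (f : (X →₀ ℕ) → ℝ) (k : ℕ) (D : X →₀ ℕ) : ℝ :=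
  sSup {v | ∃ D', ddist D D' ≤ k ∧ v = LS f D'}

/-- Smooth sensitivity of `f` at `D` with parameter `β`. -/
noncomputable def Sstar {X : Type*} [DecidableEq X] (f : (X →₀ ℕ) → ℝ) (β : ℝ)
    (D : X →₀ ℕ) : ℝ :=
  sSup {v | ∃ D', v = LS f D' * Real.exp (-β * (ddist D D' : ℝ))}

/- Each term `g a * w (d a)` is dominated by the level `k = d a` of the right-hand side, and
conversely on the level `k` every `w k * g a` with `d a ≤ k` is at most `w (d a) * g a`, because
the weight decreases with the distance. -/
theorem Real.iSup_mul_antitone_comp_eq_iSup_mul_iSup_sublevel {α : Type*} (g : α → ℝ)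
    (d : α → ℕ) (w : ℕ → ℝ) (hg₀ : ∀ a, 0 ≤ g a) (hg : BddAbove (Set.range g))
    (hw₀ : ∀ k, 0 ≤ w k) (hw : Antitone w) :
    ⨆ a, g a * w (d a) = ⨆ k, w k * ⨆ a : {a // d a ≤ k}, g a := by
  have hM₀ : 0 ≤ ⨆ a, g a := Real.iSup_nonneg hg₀
  have hsub_bdd (k : ℕ) : BddAbove (Set.range fun a : {a // d a ≤ k} => g a) :=
    hg.mono (Set.range_comp_subset_range Subtype.val g)
  have hsub_le (k : ℕ) : ⨆ a : {a // d a ≤ k}, g a ≤ ⨆ a, g a :=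
    Real.iSup_le (fun a => le_ciSup hg a) hM₀
  have hlhs_bdd : BddAbove (Set.range fun a => g a * w (d a)) := by
    refine ⟨(⨆ a, g a) * w 0, ?_⟩
    rintro _ ⟨a, rfl⟩
    exact mul_le_mul (le_ciSup hg a) (hw (Nat.zero_le _)) (hw₀ _) hM₀
  have hrhs_bdd : BddAbove (Set.range fun k => w k * ⨆ a : {a // d a ≤ k}, g a) := by
    refine ⟨w 0 * ⨆ a, g a, ?_⟩
    rintro _ ⟨k, rfl⟩
    exact mul_le_mul (hw (Nat.zero_le k)) (hsub_le k) (Real.iSup_nonneg fun a => hg₀ a) (hw₀ 0)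
  apply le_antisymm
  · refine Real.iSup_le (fun a => ?_)
      (Real.iSup_nonneg fun k => mul_nonneg (hw₀ k) (Real.iSup_nonneg fun a => hg₀ a))
    calc g a * w (d a) = w (d a) * g a := mul_comm _ _
      _ ≤ w (d a) * ⨆ b : {b // d b ≤ d a}, g b :=
        mul_le_mul_of_nonneg_left (le_ciSup (hsub_bdd (d a)) ⟨a, le_rfl⟩) (hw₀ _)
      _ ≤ _ := le_ciSup hrhs_bdd (d a)
  · refine ciSup_le fun k => ?_
    rw [Real.mul_iSup_of_nonneg (hw₀ k)]
    refine Real.iSup_le (fun ⟨a, ha⟩ => ?_)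
      (Real.iSup_nonneg fun a => mul_nonneg (hg₀ a) (hw₀ _))
    calc w k * g a ≤ w (d a) * g a := mul_le_mul_of_nonneg_right (hw ha) (hg₀ a)
      _ = g a * w (d a) := mul_comm _ _
      _ ≤ _ := le_ciSup hlhs_bdd a

section Sensitivity

variable {X : Type*} [DecidableEq X] (f : (X →₀ ℕ) → ℝ)

theorem LS_nonneg (D : X →₀ ℕ) : 0 ≤ LS f D :=
  Real.sSup_nonneg fun _ ⟨_, _, hv⟩ => hv ▸ abs_nonneg _

theorem LS_le_two_mul {B : ℝ} (hB : ∀ D, |f D| ≤ B) (D : X →₀ ℕ) : LS f D ≤ 2 * B := by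
  refine Real.sSup_le (fun _ ⟨D', _, hv⟩ => ?_) (by linarith [abs_nonneg (f D), hB D])
  rw [hv, two_mul]
  exact (abs_sub _ _).trans (add_le_add (hB D) (hB D'))

theorem Tk_eq_iSup (k : ℕ) (D : X →₀ ℕ) :
    Tk f k D = ⨆ D' : {D' // ddist D D' ≤ k}, LS f D' := by
  rw [Tk, iSup, Set.range]
  congr 1
  ext v
  simp [eq_comm]

theorem Sstar_eq_iSup (β : ℝ) (D : X →₀ ℕ) :
    Sstar f β D = ⨆ D', LS f D' * Real.exp (-β * (ddist D D' : ℝ)) := by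
  rw [Sstar, iSup, Set.range]
  simp only [eq_comm]

end Sensitivity

theorem smooth_sensitivity_iterative_general {X : Type*} [DecidableEq X]
    (f : (X →₀ ℕ) → ℝ) (hf : ∃ B : ℝ, ∀ D, |f D| ≤ B)
    (β : ℝ) (hβ : 0 < β) (D : X →₀ ℕ) :
    Sstar f β D = ⨆ k : ℕ, Real.exp (-β * (k : ℝ)) * Tk f k D := by
  obtain ⟨B, hB⟩ := hf
  have hweight : Antitone fun k : ℕ => Real.exp (-β * (k : ℝ)) := fun i j hij =>
    Real.exp_le_exp.2 (mul_le_mul_of_nonpos_left (Nat.cast_le.2 hij) (neg_nonpos.2 hβ.le))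
  simp only [Sstar_eq_iSup, Tk_eq_iSup]
  exact Real.iSup_mul_antitone_comp_eq_iSup_mul_iSup_sublevel (LS f) (ddist D) _
    (LS_nonneg f) ⟨2 * B, Set.forall_mem_range.2 (LS_le_two_mul f hB)⟩
    (fun _ => (Real.exp_pos _).le) hweight

theorem smooth_sensitivity_iterative {X : Type*} [DecidableEq X] [Countable X] [Nonempty X]
    (f : (X →₀ ℕ) → ℝ) (hf : ∃ B : ℝ, ∀ D, |f D| ≤ B)
    (β : ℝ) (hβ : 0 < β) (D : X →₀ ℕ) :
    Sstar f β D = ⨆ k : ℕ, Real.exp (-β * (k : ℝ)) * Tk f k D :=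
  smooth_sensitivity_iterative_general f hf β hβ D
end
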